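/- arXiv:2505.20786 — 2 statements merged into one kernel-verified Lean document; each statement's English description precedes it below -/
import Mathlib

section
/- Let q_{n−1}, q_n, q_{n+1} : ℝ × ℝ → ℂ be smooth functions of (ξ,η) such that the rescaled two-dimensional Toda lattice equation holds at index n: ∂²q_n/∂ξ∂η = (1/4)(e^{q_{n+1}−q_n} − e^{q_n−q_{n−1}}). Define Q₁ := −e^{−q_n}, Q₂ := e^{q_{n+1}}, Q₁⁻ := −e^{−q_{n−1}}, Q₂⁻ := e^{q_n}. Then the inverse Bäcklund transformation formulas hold: Q₂⁻ = −1/Q₁ and Q₁⁻ = 4·∂²Q₁/∂ξ∂η − 4·(∂Q₁/∂ξ)(∂Q₁/∂η)/Q₁ − Q₁²·Q₂. -/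
/-- Partial derivative in the first variable (ξ) of a function `ℝ × ℝ → ℂ`. -/
noncomputable def pdXi (f : ℝ × ℝ → ℂ) (p : ℝ × ℝ) : ℂ :=
  deriv (fun s => f (s, p.2)) p.1

/-- Partial derivative in the second variable (η) of a function `ℝ × ℝ → ℂ`. -/
noncomputable def pdEta (f : ℝ × ℝ → ℂ) (p : ℝ × ℝ) : ℂ :=
  deriv (fun s => f (p.1, s)) p.2



lemma hasDerivAt_slice_eta (f : ℝ × ℝ → ℂ) (hf : ContDiff ℝ (⊤ : ℕ∞) f) (p : ℝ × ℝ) :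
    HasDerivAt (fun s => f (p.1, s)) (fderiv ℝ f p (0, 1)) p.2 := by
  obtain ⟨a, b⟩ := p
  have hcurve : HasDerivAt (fun s : ℝ => ((a : ℝ), s)) ((0 : ℝ), (1 : ℝ)) b :=
    (hasDerivAt_const _ _).prodMk (hasDerivAt_id _)
  exact ((hf.differentiable (by simp) (a, b)).hasFDerivAt).comp_hasDerivAt b hcurve

lemma hasDerivAt_slice_xi (f : ℝ × ℝ → ℂ) (hf : ContDiff ℝ (⊤ : ℕ∞) f) (p : ℝ × ℝ) :
    HasDerivAt (fun s => f (s, p.2)) (fderiv ℝ f p (1, 0)) p.1 := by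
  obtain ⟨a, b⟩ := p
  have hcurve : HasDerivAt (fun s : ℝ => (s, (b : ℝ))) ((1 : ℝ), (0 : ℝ)) a :=
    (hasDerivAt_id _).prodMk (hasDerivAt_const _ _)
  exact ((hf.differentiable (by simp) (a, b)).hasFDerivAt).comp_hasDerivAt a hcurve

lemma pdEta_eq (f : ℝ × ℝ → ℂ) (hf : ContDiff ℝ (⊤ : ℕ∞) f) :
    pdEta f = fun p => fderiv ℝ f p (0, 1) := by
  funext p
  exact (hasDerivAt_slice_eta f hf p).deriv

lemma pdXi_eq (f : ℝ × ℝ → ℂ) (hf : ContDiff ℝ (⊤ : ℕ∞) f) :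
    pdXi f = fun p => fderiv ℝ f p (1, 0) := by
  funext p
  exact (hasDerivAt_slice_xi f hf p).deriv

lemma contDiff_fderiv_apply (f : ℝ × ℝ → ℂ) (hf : ContDiff ℝ (⊤ : ℕ∞) f) (v : ℝ × ℝ) :
    ContDiff ℝ (⊤ : ℕ∞) (fun p => fderiv ℝ f p v) :=
  (hf.fderiv_right (by simp)).clm_apply contDiff_const

lemma alg_ibt (u v z A B s : ℂ) (hu : u ≠ 0) (hs : s * u = v) :
    -v = 4 * (u * -A * B + u * (1 / 4 * (z * u - s)))
      - 4 * (u * A * (u * B)) / -u - (-u) ^ 2 * z := by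
  rw [← hs, div_neg]
  field_simp
  ring

/-- The inverse Bäcklund transformation of the rescaled 2D Toda lattice. -/
theorem inverse_backlund_transformation
    (qnm1 qn qn1 : ℝ × ℝ → ℂ)
    (hqnm1 : ContDiff ℝ (⊤ : ℕ∞) qnm1)
    (hqn : ContDiff ℝ (⊤ : ℕ∞) qn)
    (hqn1 : ContDiff ℝ (⊤ : ℕ∞) qn1)
    (hToda : ∀ p, pdXi (pdEta qn) p =
      (1 / 4) * (Complex.exp (qn1 p - qn p) - Complex.exp (qn p - qnm1 p)))
    (Q₁ Q₂ Q₁m Q₂m : ℝ × ℝ → ℂ)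
    (hQ₁ : ∀ p, Q₁ p = -Complex.exp (-qn p))
    (hQ₂ : ∀ p, Q₂ p = Complex.exp (qn1 p))
    (hQ₁m : ∀ p, Q₁m p = -Complex.exp (-qnm1 p))
    (hQ₂m : ∀ p, Q₂m p = Complex.exp (qn p)) :
    ∀ p, Q₂m p = -1 / Q₁ p ∧
      Q₁m p = 4 * pdXi (pdEta Q₁) p - 4 * (pdXi Q₁ p * pdEta Q₁ p) / Q₁ p
        - (Q₁ p) ^ 2 * Q₂ p := by
  have hQ₁fun : Q₁ = fun p => -Complex.exp (-qn p) := funext hQ₁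
  set g : ℝ × ℝ → ℂ := fun p => fderiv ℝ qn p (0, 1) with hg
  have hgsmooth : ContDiff ℝ (⊤ : ℕ∞) g := contDiff_fderiv_apply qn hqn _
  -- pointwise derivative facts
  have hXiQ₁ : ∀ p, pdXi Q₁ p = Complex.exp (-qn p) * fderiv ℝ qn p (1, 0) := by
    intro p
    have h := (((hasDerivAt_slice_xi qn hqn p).neg).cexp).neg
    rw [hQ₁fun]
    unfold pdXi
    rw [show (fun s => (fun p => -Complex.exp (-qn p)) (s, p.2)) = (-fun x => Complex.exp ((-fun s => qn (s, p.2)) x)) from rfl, h.deriv]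
    simp only [Pi.neg_apply, Prod.mk.eta]
    ring
  have hEtaQ₁ : ∀ p, pdEta Q₁ p = Complex.exp (-qn p) * fderiv ℝ qn p (0, 1) := by
    intro p
    have h := (((hasDerivAt_slice_eta qn hqn p).neg).cexp).neg
    rw [hQ₁fun]
    unfold pdEta
    rw [show (fun s => (fun p => -Complex.exp (-qn p)) (p.1, s)) = (-fun x => Complex.exp ((-fun s => qn (p.1, s)) x)) from rfl, h.deriv]
    simp only [Pi.neg_apply, Prod.mk.eta]
    ring
  have hEtaQ₁fun : pdEta Q₁ = fun p => Complex.exp (-qn p) * g p := funext hEtaQ₁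
  intro p
  constructor
  · rw [hQ₂m, hQ₁, Complex.exp_neg]
    field_simp
  · -- second mixed derivative of Q₁
    have hE : pdXi g p = (1 / 4) * (Complex.exp (qn1 p - qn p)
        - Complex.exp (qn p - qnm1 p)) := by
      rw [show g = pdEta qn from (pdEta_eq qn hqn).symm]
      exact hToda p
    have h1 : HasDerivAt (fun s => Complex.exp (-qn (s, p.2)))
        (Complex.exp (-qn p) * -(fderiv ℝ qn p (1, 0))) p.1 := by
      have := ((hasDerivAt_slice_xi qn hqn p).neg).cexp
      simpa using this
    have h2 : HasDerivAt (fun s => g (s, p.2)) (pdXi g p) p.1 := by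
      have := hasDerivAt_slice_xi g hgsmooth p
      rwa [pdXi_eq g hgsmooth]
    have hmix : pdXi (pdEta Q₁) p
        = Complex.exp (-qn p) * -(fderiv ℝ qn p (1, 0)) * g p
          + Complex.exp (-qn p) * pdXi g p := by
      rw [hEtaQ₁fun]
      unfold pdXi
      exact (h1.mul h2).deriv
    rw [hQ₁m, hQ₁, hQ₂, hXiQ₁, hEtaQ₁, hmix, hE]
    simp only [hg]
    rw [sub_eq_add_neg (qn1 p) (qn p), Complex.exp_add,
        sub_eq_add_neg (qn p) (qnm1 p), Complex.exp_add]
    exact alg_ibt (Complex.exp (-qn p)) (Complex.exp (-qnm1 p)) (Complex.exp (qn1 p))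
      (fderiv ℝ qn p (1, 0)) (fderiv ℝ qn p (0, 1))
      (Complex.exp (qn p) * Complex.exp (-qnm1 p)) (Complex.exp_ne_zero _)
      (by rw [← Complex.exp_add, ← Complex.exp_add]; congr 1; ring)
end

section
/- Let (q_m)_{m∈ℤ} be a family of smooth functions ℝ × ℝ → ℂ of (ξ,η) satisfying the rescaled two-dimensional Toda lattice ∂²q_m/∂ξ∂η = (1/4)(e^{q_{m+1}−q_m} − e^{q_m−q_{m−1}}) for all m ∈ ℤ. For n ∈ ℤ define Q₁(n) := −e^{−q_{2n−1}} and Q₂(n) := e^{q_{2n}}. Then for every n ∈ ℤ the following coupled lattice equations hold: ∂²Q₁(n)/∂ξ∂η = (∂Q₁(n)/∂ξ)(∂Q₁(n)/∂η)/Q₁(n) + (1/4)·Q₁(n)²·Q₂(n) − 1/(4·Q₂(n−1)), and ∂²Q₂(n)/∂ξ∂η = (∂Q₂(n)/∂ξ)(∂Q₂(n)/∂η)/Q₂(n) + (1/4)·Q₂(n)²·Q₁(n) − 1/(4·Q₁(n+1)). -/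
lemma hasDerivAt_pdXi (f : ℝ × ℝ → ℂ) (hf : Differentiable ℝ f) (p : ℝ × ℝ) :
    HasDerivAt (fun s => f (s, p.2)) (pdXi f p) p.1 := by
  have h : DifferentiableAt ℝ (fun s : ℝ => f (s, p.2)) p.1 :=
    DifferentiableAt.comp p.1 (hf (p.1, p.2))
      (differentiableAt_id.prodMk (differentiableAt_const _))
  exact h.hasDerivAt

lemma hasDerivAt_pdEta (f : ℝ × ℝ → ℂ) (hf : Differentiable ℝ f) (p : ℝ × ℝ) :
    HasDerivAt (fun s => f (p.1, s)) (pdEta f p) p.2 := by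
  have h : DifferentiableAt ℝ (fun s : ℝ => f (p.1, s)) p.2 :=
    DifferentiableAt.comp p.2 (hf (p.1, p.2))
      ((differentiableAt_const _).prodMk differentiableAt_id)
  exact h.hasDerivAt

lemma pdEta_eq_fderiv (f : ℝ × ℝ → ℂ) (hf : Differentiable ℝ f) (p : ℝ × ℝ) :
    pdEta f p = fderiv ℝ f p (0, 1) := by
  have h : HasDerivAt (fun s => f (p.1, s)) (fderiv ℝ f p ((0 : ℝ), (1 : ℝ))) p.2 := by
    have := (hf p).hasFDerivAt.comp_hasDerivAt p.2
      ((hasDerivAt_const p.2 p.1).prodMk (hasDerivAt_id p.2))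
    simp at this; exact this
  exact h.deriv

lemma contDiff_pdEta (f : ℝ × ℝ → ℂ) (hf : ContDiff ℝ (⊤ : ℕ∞) f) :
    ContDiff ℝ (⊤ : ℕ∞) (pdEta f) := by
  have hd := hf.differentiable (by norm_num)
  have : pdEta f = fun p => fderiv ℝ f p (0, 1) :=
    funext fun p => pdEta_eq_fderiv f hd p
  rw [this]
  exact (hf.fderiv_right (by norm_num)).clm_apply contDiff_const

/-- Solutions of the rescaled 2D Toda lattice give, via
`Q₁(n) = −e^{−q_{2n−1}}`, `Q₂(n) = e^{q_{2n}}`, solutions of the coupled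
lattice equations. -/
theorem toda_coupled_lattice
    (q : ℤ → ℝ × ℝ → ℂ)
    (hq : ∀ m, ContDiff ℝ (⊤ : ℕ∞) (q m))
    (hToda : ∀ m : ℤ, ∀ p, pdXi (pdEta (q m)) p =
      (1 / 4) * (Complex.exp (q (m + 1) p - q m p) - Complex.exp (q m p - q (m - 1) p)))
    (Q₁ Q₂ : ℤ → ℝ × ℝ → ℂ)
    (hQ₁ : ∀ n p, Q₁ n p = -Complex.exp (-q (2 * n - 1) p))
    (hQ₂ : ∀ n p, Q₂ n p = Complex.exp (q (2 * n) p)) :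
    ∀ n : ℤ, ∀ p,
      pdXi (pdEta (Q₁ n)) p =
        pdXi (Q₁ n) p * pdEta (Q₁ n) p / Q₁ n p
          + (1 / 4) * (Q₁ n p) ^ 2 * Q₂ n p - 1 / (4 * Q₂ (n - 1) p) ∧
      pdXi (pdEta (Q₂ n)) p =
        pdXi (Q₂ n) p * pdEta (Q₂ n) p / Q₂ n p
          + (1 / 4) * (Q₂ n p) ^ 2 * Q₁ n p - 1 / (4 * Q₁ (n + 1) p) := by
  intro n p
  have hdf : ∀ m : ℤ, Differentiable ℝ (q m) := fun m => (hq m).differentiable (by norm_num)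
  have hdE : ∀ m : ℤ, Differentiable ℝ (pdEta (q m)) :=
    fun m => (contDiff_pdEta (q m) (hq m)).differentiable (by norm_num)
  constructor
  · -- Q₁ part, with f = q (2n-1)
    set m : ℤ := 2 * n - 1 with hm
    -- η-derivative of Q₁ n as a function
    have hE1 : ∀ r, pdEta (Q₁ n) r =
        Complex.exp (-(q m r)) * pdEta (q m) r := by
      intro r
      have h0 : (fun s => Q₁ n (r.1, s)) = fun s => -Complex.exp (-(q m (r.1, s))) := by
        funext s; rw [hQ₁]
      have h := (((hasDerivAt_pdEta (q m) (hdf m) r).neg).cexp).neg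
      have h' : HasDerivAt (fun s => Q₁ n (r.1, s))
          (Complex.exp (-(q m r)) * pdEta (q m) r) r.2 := by
        rw [h0]; exact h.congr_deriv (by simp only [Pi.neg_apply, Prod.mk.eta]; ring)
      exact h'.deriv
    have hX1 : pdXi (Q₁ n) p = Complex.exp (-(q m p)) * pdXi (q m) p := by
      have h0 : (fun s => Q₁ n (s, p.2)) = fun s => -Complex.exp (-(q m (s, p.2))) := by
        funext s; rw [hQ₁]
      have h := (((hasDerivAt_pdXi (q m) (hdf m) p).neg).cexp).neg
      have h' : HasDerivAt (fun s => Q₁ n (s, p.2))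
          (Complex.exp (-(q m p)) * pdXi (q m) p) p.1 := by
        rw [h0]; exact h.congr_deriv (by simp only [Pi.neg_apply, Prod.mk.eta]; ring)
      exact h'.deriv
    have hD : pdXi (pdEta (Q₁ n)) p =
        Complex.exp (-(q m p)) * -(pdXi (q m) p) * pdEta (q m) p
          + Complex.exp (-(q m p)) * pdXi (pdEta (q m)) p := by
      have hE : pdEta (Q₁ n) = fun r => Complex.exp (-(q m r)) * pdEta (q m) r :=
        funext hE1
      rw [hE]
      exact ((((hasDerivAt_pdXi (q m) (hdf m) p).neg).cexp).mul
        (hasDerivAt_pdXi (pdEta (q m)) (hdE m) p)).deriv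
    have hT : pdXi (pdEta (q m)) p = (1 / 4) *
        (Complex.exp (q (2 * n) p - q m p) - Complex.exp (q m p - q (2 * (n - 1)) p)) := by
      have := hToda m p
      rw [show m + 1 = 2 * n by rw [hm]; ring, show m - 1 = 2 * (n - 1) by rw [hm]; ring] at this
      exact this
    rw [hD, hX1, hE1 p, hT, hQ₁ n p, hQ₂ n p, hQ₂ (n - 1) p]
    simp only [Complex.exp_sub, Complex.exp_neg]
    set a := Complex.exp (q (2 * (n - 1)) p) with hA
    set b := Complex.exp (q m p) with hB
    set c := Complex.exp (q (2 * n) p) with hC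
    have ha : a ≠ 0 := hA ▸ Complex.exp_ne_zero _
    have hb : b ≠ 0 := hB ▸ Complex.exp_ne_zero _
    have hc : c ≠ 0 := hC ▸ Complex.exp_ne_zero _
    clear_value a b c
    have h4 : (4 : ℂ) ≠ 0 := by norm_num
    field_simp
    ring
  · -- Q₂ part, with f = q (2n)
    set m : ℤ := 2 * n with hm
    have hE1 : ∀ r, pdEta (Q₂ n) r = Complex.exp (q m r) * pdEta (q m) r := by
      intro r
      have h0 : (fun s => Q₂ n (r.1, s)) = fun s => Complex.exp (q m (r.1, s)) := by
        funext s; rw [hQ₂]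
      have h' : HasDerivAt (fun s => Q₂ n (r.1, s))
          (Complex.exp (q m r) * pdEta (q m) r) r.2 := by
        rw [h0]; exact (hasDerivAt_pdEta (q m) (hdf m) r).cexp
      exact h'.deriv
    have hX1 : pdXi (Q₂ n) p = Complex.exp (q m p) * pdXi (q m) p := by
      have h0 : (fun s => Q₂ n (s, p.2)) = fun s => Complex.exp (q m (s, p.2)) := by
        funext s; rw [hQ₂]
      have h' : HasDerivAt (fun s => Q₂ n (s, p.2))
          (Complex.exp (q m p) * pdXi (q m) p) p.1 := by
        rw [h0]; exact (hasDerivAt_pdXi (q m) (hdf m) p).cexp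
      exact h'.deriv
    have hD : pdXi (pdEta (Q₂ n)) p =
        Complex.exp (q m p) * pdXi (q m) p * pdEta (q m) p
          + Complex.exp (q m p) * pdXi (pdEta (q m)) p := by
      have hE : pdEta (Q₂ n) = fun r => Complex.exp (q m r) * pdEta (q m) r :=
        funext hE1
      rw [hE]
      exact (((hasDerivAt_pdXi (q m) (hdf m) p).cexp).mul
        (hasDerivAt_pdXi (pdEta (q m)) (hdE m) p)).deriv
    have hT : pdXi (pdEta (q m)) p = (1 / 4) *
        (Complex.exp (q (2 * (n + 1) - 1) p - q m p)
          - Complex.exp (q m p - q (2 * n - 1) p)) := by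
      have := hToda m p
      rw [show m + 1 = 2 * (n + 1) - 1 by rw [hm]; ring,
        show m - 1 = 2 * n - 1 from hm ▸ rfl] at this
      exact this
    rw [hD, hX1, hE1 p, hT, hQ₂ n p, hQ₁ n p, hQ₁ (n + 1) p]
    simp only [Complex.exp_sub, Complex.exp_neg]
    set a := Complex.exp (q (2 * n - 1) p) with hA
    set b := Complex.exp (q m p) with hB
    set c := Complex.exp (q (2 * (n + 1) - 1) p) with hC
    have ha : a ≠ 0 := hA ▸ Complex.exp_ne_zero _
    have hb : b ≠ 0 := hB ▸ Complex.exp_ne_zero _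
    have hc : c ≠ 0 := hC ▸ Complex.exp_ne_zero _
    clear_value a b c
    have h4 : (4 : ℂ) ≠ 0 := by norm_num
    field_simp
    ring
end
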